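/- Let p ≥ 1, 0 < α̂ < 1, and let q_0,...,q_p be the Lagrange basis polynomials at equally spaced nodes ξ_i = i/p on [0,1]. Define ψ_0(x) = x·𝟙_{[0,α̂)}(x) and ψ_1(x) = (x-1)·𝟙_{[α̂,1]}(x). Then for any two polynomials u_1, u_2 of degree ≤ p, the piecewise polynomial u(x) = u_1(x) for x ∈ [0, α̂) and u(x) = u_2(x) for x ∈ [α̂, 1] can be written as u = ζ_0 q_0 + ζ_p q_p + Σ_{j=0}^{p} ζ_{j+p+1} q_j ψ_0 + Σ_{j=0}^{p} ζ_{j+2p+2} q_j ψ_1 for unique real coefficients ζ_0, ζ_p, ζ_{p+1},...,ζ_{3p+2}. -/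

import Mathlib

/-- The Lagrange basis polynomial of degree `p` at the equally spaced nodes
`ξ i = i / p` in `[0,1]`, as a function `ℝ → ℝ`. -/
noncomputable def lagrangeBasis (p : ℕ) (i : Fin (p+1)) : ℝ → ℝ :=
  fun x => ∏ j ∈ Finset.univ.erase i, (x - (j : ℕ)/(p : ℝ)) / ((i : ℕ)/(p : ℝ) - (j : ℕ)/(p : ℝ))

/-- One-sided enrichment function `ψ₀ = x·𝟙_{[0,α̂)}`. -/
noncomputable def psi0 (αhat : ℝ) : ℝ → ℝ := fun x => if x < αhat then x else 0

/-- One-sided enrichment function `ψ₁ = (x-1)·𝟙_{[α̂,1]}`. -/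
noncomputable def psi1 (αhat : ℝ) : ℝ → ℝ := fun x => if x < αhat then 0 else x - 1

/-!
On `[0, α̂)` the enriched expansion is the polynomial `ζ₀ q₀ + ζₚ qₚ + x A` and on `[α̂, 1]` it is
`ζ₀ q₀ + ζₚ qₚ + (x - 1) B`, where `A` and `B` interpolate the two coefficient vectors at the
nodes. As `qₚ(0) = 0 = q₀(1)`, evaluating at `0` and `1` forces `ζ₀ = u₁(0)` and `ζₚ = u₂(1)`.
Then `u₁ - ζ₀ q₀ - ζₚ qₚ` vanishes at `0` and `u₂ - ζ₀ q₀ - ζₚ qₚ` at `1`, so dividing by `x`,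
resp. `x - 1`, leaves polynomials of degree `< p + 1`, which are the interpolants of exactly
one vector of nodal values.
-/

open Polynomial Finset

theorem Lagrange.existsUnique_mul_interpolate_eq {F ι : Type*} [Field F] [Fintype ι]
    [DecidableEq ι] {v : ι → F} (hv : Function.Injective v) {d w : F[X]} (hd : d ≠ 0)
    (hdw : d ∣ w) (hw : w.degree < Fintype.card ι) :
    ∃! r : ι → F, d * Lagrange.interpolate univ v r = w := by
  obtain ⟨q, rfl⟩ := hdw
  have hq : q.degree < #(univ : Finset ι) :=
    (mul_comm d q ▸ degree_le_mul_left q hd).trans_lt (by simpa using hw)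
  refine ⟨fun i => q.eval (v i), ?_, fun r hr => ?_⟩
  · exact congrArg (d * ·) (Lagrange.eq_interpolate hv.injOn hq).symm
  funext i
  rw [← mul_left_cancel₀ hd hr, Lagrange.eval_interpolate_at_node r hv.injOn (mem_univ i)]

theorem Polynomial.eq_of_eqOn_Ioo {a b : ℝ} (hab : a < b) {f g : ℝ[X]}
    (h : Set.EqOn f.eval g.eval (Set.Ioo a b)) : f = g :=
  eq_of_infinite_eval_eq f g ((Set.Ioo_infinite hab).mono h)

theorem Fin.zero_ne_last {n : ℕ} (hn : n ≠ 0) : (0 : Fin (n + 1)) ≠ Fin.last n :=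
  Fin.ext_iff.not.mpr (by simpa using Ne.symm hn)

noncomputable def equispacedNodes (p : ℕ) (i : Fin (p + 1)) : ℝ := (i : ℕ) / (p : ℝ)

noncomputable def lagrangeBasisPoly (p : ℕ) (i : Fin (p + 1)) : ℝ[X] :=
  Lagrange.basis univ (equispacedNodes p) i

noncomputable def lagrangeInterp (p : ℕ) (r : Fin (p + 1) → ℝ) : ℝ[X] :=
  Lagrange.interpolate univ (equispacedNodes p) r

noncomputable def endpointPoly (p : ℕ) (c₀ cₚ : ℝ) : ℝ[X] :=
  C c₀ * lagrangeBasisPoly p 0 + C cₚ * lagrangeBasisPoly p (Fin.last p)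

section Nodes

variable {p : ℕ}

theorem equispacedNodes_injective (hp : p ≠ 0) : Function.Injective (equispacedNodes p) := by
  intro i j hij
  have hpR : (p : ℝ) ≠ 0 := Nat.cast_ne_zero.mpr hp
  exact Fin.ext (by exact_mod_cast (div_left_inj' hpR).mp hij)

@[simp]
theorem equispacedNodes_zero : equispacedNodes p 0 = 0 := by
  simp [equispacedNodes]

theorem equispacedNodes_last (hp : p ≠ 0) : equispacedNodes p (Fin.last p) = 1 := by
  simp [equispacedNodes, hp]

theorem lagrangeBasis_eq_eval (i : Fin (p + 1)) (x : ℝ) :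
    lagrangeBasis p i x = (lagrangeBasisPoly p i).eval x := by
  simp only [lagrangeBasis, lagrangeBasisPoly, Lagrange.basis, eval_prod,
    Lagrange.basisDivisor, eval_mul, eval_C, eval_sub, eval_X, equispacedNodes]
  exact prod_congr rfl fun j _ => by rw [div_eq_mul_inv, mul_comm]

theorem sum_mul_lagrangeBasis (r : Fin (p + 1) → ℝ) (x : ℝ) :
    ∑ j, r j * lagrangeBasis p j x = (lagrangeInterp p r).eval x := by
  simp [lagrangeInterp, Lagrange.interpolate_apply, eval_finsetSum, lagrangeBasis_eq_eval,
    lagrangeBasisPoly]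

theorem endpointPoly_eval_zero (hp : p ≠ 0) (c₀ cₚ : ℝ) : (endpointPoly p c₀ cₚ).eval 0 = c₀ := by
  have h₀ := Lagrange.eval_basis_self (equispacedNodes_injective hp).injOn (mem_univ 0)
  have hₚ := Lagrange.eval_basis_of_ne (v := equispacedNodes p) (Fin.zero_ne_last hp).symm
    (mem_univ 0)
  rw [equispacedNodes_zero] at h₀ hₚ
  simp [endpointPoly, lagrangeBasisPoly, h₀, hₚ]

theorem endpointPoly_eval_one (hp : p ≠ 0) (c₀ cₚ : ℝ) : (endpointPoly p c₀ cₚ).eval 1 = cₚ := by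
  have h₀ := Lagrange.eval_basis_of_ne (v := equispacedNodes p) (Fin.zero_ne_last hp)
    (mem_univ _)
  have hₚ := Lagrange.eval_basis_self (equispacedNodes_injective hp).injOn (mem_univ (Fin.last p))
  rw [equispacedNodes_last hp] at h₀ hₚ
  simp [endpointPoly, lagrangeBasisPoly, h₀, hₚ]

theorem endpointPoly_mem_degreeLT (hp : p ≠ 0) (c₀ cₚ : ℝ) :
    endpointPoly p c₀ cₚ ∈ degreeLT ℝ (p + 1) := by
  have hbasis (i) : lagrangeBasisPoly p i ∈ degreeLT ℝ (p + 1) := by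
    rw [mem_degreeLT, lagrangeBasisPoly,
      Lagrange.degree_basis (equispacedNodes_injective hp).injOn (mem_univ i), card_univ,
      Fintype.card_fin, Nat.add_sub_cancel]
    exact Nat.cast_lt.mpr p.lt_succ_self
  simp only [endpointPoly, C_mul']
  exact add_mem (Submodule.smul_mem _ _ (hbasis 0)) (Submodule.smul_mem _ _ (hbasis _))

end Nodes

theorem piecewise_eval_eq_iff {a b α : ℝ} (haα : a < α) (hαb : α < b) (f₁ f₂ g₁ g₂ : ℝ[X]) :
    (∀ x ∈ Set.Icc a b, (if x < α then f₁.eval x else f₂.eval x) =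
        if x < α then g₁.eval x else g₂.eval x) ↔ f₁ = g₁ ∧ f₂ = g₂ := by
  refine ⟨fun h => ⟨eq_of_eqOn_Ioo haα fun x hx => ?_, eq_of_eqOn_Ioo hαb fun x hx => ?_⟩, ?_⟩
  · simpa [hx.2] using h x ⟨hx.1.le, hx.2.trans hαb |>.le⟩
  · simpa [hx.1.not_gt] using h x ⟨haα.trans hx.1 |>.le, hx.2.le⟩
  · rintro ⟨rfl, rfl⟩ x _
    rfl

theorem enriched_expansion_eq_piecewise {p : ℕ} (α c₀ cₚ : ℝ) (a b : Fin (p + 1) → ℝ) (x : ℝ) :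
    c₀ * lagrangeBasis p 0 x + cₚ * lagrangeBasis p (Fin.last p) x +
        (∑ j, a j * lagrangeBasis p j x * psi0 α x) +
        (∑ j, b j * lagrangeBasis p j x * psi1 α x) =
      if x < α then (endpointPoly p c₀ cₚ + X * lagrangeInterp p a).eval x
      else (endpointPoly p c₀ cₚ + (X - C 1) * lagrangeInterp p b).eval x := by
  simp only [← sum_mul, sum_mul_lagrangeBasis]
  simp only [psi0, psi1, endpointPoly, eval_add, eval_mul, eval_sub, eval_C, eval_X,
    lagrangeBasis_eq_eval]
  split_ifs <;> ring

theorem stmt_7 (p : ℕ) (hp : 1 ≤ p) (αhat : ℝ) (hα : 0 < αhat) (hα1 : αhat < 1)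
    (u₁ u₂ : Polynomial ℝ) (hu₁ : u₁.degree ≤ p) (hu₂ : u₂.degree ≤ p) :
    ∃! ζ : ℝ × ℝ × (Fin (p+1) → ℝ) × (Fin (p+1) → ℝ),
      ∀ x ∈ Set.Icc (0:ℝ) 1,
        (if x < αhat then u₁.eval x else u₂.eval x) =
          ζ.1 * lagrangeBasis p 0 x + ζ.2.1 * lagrangeBasis p (Fin.last p) x +
          (∑ j : Fin (p+1), ζ.2.2.1 j * lagrangeBasis p j x * psi0 αhat x) +
          (∑ j : Fin (p+1), ζ.2.2.2 j * lagrangeBasis p j x * psi1 αhat x) := by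
  have hp₀ : p ≠ 0 := by omega
  simp only [enriched_expansion_eq_piecewise, piecewise_eval_eq_iff hα hα1]
  set c₀ := u₁.eval 0
  set cₚ := u₂.eval 1
  have hdeg (u : ℝ[X]) (hu : u.degree ≤ p) :
      (u - endpointPoly p c₀ cₚ).degree < Fintype.card (Fin (p + 1)) := by
    rw [Fintype.card_fin, ← mem_degreeLT]
    exact sub_mem (mem_degreeLT.mpr (hu.trans_lt (Nat.cast_lt.mpr p.lt_succ_self)))
      (endpointPoly_mem_degreeLT hp₀ c₀ cₚ)
  obtain ⟨a, ha, ha_uniq⟩ := Lagrange.existsUnique_mul_interpolate_eq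
    (equispacedNodes_injective hp₀) X_ne_zero
    (X_dvd_iff.mpr (by simp [coeff_zero_eq_eval_zero, endpointPoly_eval_zero hp₀, c₀]))
    (hdeg u₁ hu₁)
  obtain ⟨b, hb, hb_uniq⟩ := Lagrange.existsUnique_mul_interpolate_eq
    (equispacedNodes_injective hp₀) (X_sub_C_ne_zero 1)
    (dvd_iff_isRoot.mpr (by simp [endpointPoly_eval_one hp₀, cₚ]))
    (hdeg u₂ hu₂)
  refine ⟨(c₀, cₚ, a, b), ⟨?_, ?_⟩, ?_⟩
  · exact eq_add_of_sub_eq' ha.symm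
  · exact eq_add_of_sub_eq' hb.symm
  rintro ⟨c₀', cₚ', a', b'⟩ ⟨h₁, h₂⟩
  obtain rfl : c₀' = c₀ := by simp [h₁, c₀, endpointPoly_eval_zero hp₀]
  obtain rfl : cₚ' = cₚ := by simp [h₂, cₚ, endpointPoly_eval_one hp₀]
  rw [ha_uniq a' (eq_sub_of_add_eq' h₁.symm), hb_uniq b' (eq_sub_of_add_eq' h₂.symm)]
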